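/- arXiv:1603.04911 — 2 statements merged into one kernel-verified Lean document; each statement's English description precedes it below -/
import Mathlib

section
/- (Obstacle avoidance, Proposition 1.) Let O ⊆ ℝ^q be a set (the obstacle). Suppose that for every index i with d − 1 ≤ i ≤ n there exists a vector c_i ∈ ℝ^q such that for every j with i − d + 1 ≤ j ≤ i and every x ∈ O one has ⟨c_i, p_j⟩ < ⟨c_i, x⟩. Then the B-spline curve avoids the obstacle: z(t) ∉ O for every t with τ_{d−1} ≤ t < τ_{n+1}. -/
/-!
On a knot span `[τ i, τ (i + 1))` only the B-splines of order `d` with indices `i + 1 - d, …, i`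
can be nonzero; they are nonnegative and sum to one there (induction on `d` through the
Cox–de Boor recursion). So `z t` is a convex combination of `p (i + 1 - d), …, p i`, all of which
lie in the open half-space `{y | ⟪c, y⟫ < ⟪c, x⟫}` for every `x ∈ O`; taking `x = z t` would give
`⟪c, z t⟫ < ⟪c, z t⟫`.
-/

/-- Cox–de Boor B-spline basis function `B_{i,d}(t)` of order `d` for the knot
vector `τ`.  In Lean, division by zero yields zero, which matches the standard
convention that any term of the recursion whose denominator vanishes is taken
to be zero. -/
noncomputable def bspline (τ : ℕ → ℝ) : ℕ → ℕ → ℝ → ℝ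
  | 0, _, _ => 0
  | 1, i, t => if τ i ≤ t ∧ t < τ (i + 1) then 1 else 0
  | d + 2, i, t =>
      (t - τ i) / (τ (i + d + 1) - τ i) * bspline τ (d + 1) i t
      + (τ (i + d + 2) - t) / (τ (i + d + 2) - τ (i + 1)) * bspline τ (d + 1) (i + 1) t
open scoped RealInnerProductSpace

open Finset

theorem bspline_congr {τ σ : ℕ → ℝ} {t : ℝ} :
    ∀ {d i : ℕ}, Set.EqOn τ σ (Set.Icc i (i + d)) → bspline τ d i t = bspline σ d i t
  | 0, _, _ => rfl
  | 1, i, h => by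
      simp only [bspline, h (Set.left_mem_Icc.2 (by omega)), h (Set.right_mem_Icc.2 (by omega))]
  | d + 2, i, h => by
      have hmem : ∀ a, i ≤ a → a ≤ i + (d + 2) → τ a = σ a := fun a h1 h2 => h ⟨h1, h2⟩
      simp only [bspline]
      rw [bspline_congr (h.mono (Set.Icc_subset_Icc le_rfl (by omega))),
        bspline_congr (h.mono (Set.Icc_subset_Icc (by omega) (by omega))),
        hmem i le_rfl (by omega), hmem (i + d + 1) (by omega) (by omega),
        hmem (i + d + 2) (by omega) (by omega), hmem (i + 1) (by omega) (by omega)]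

section Monotone

variable {τ : ℕ → ℝ} (hτ : Monotone τ) {t : ℝ}
include hτ

theorem mem_Ico_of_bspline_ne_zero :
    ∀ {d i : ℕ}, bspline τ d i t ≠ 0 → t ∈ Set.Ico (τ i) (τ (i + d))
  | 0, _, h => absurd rfl h
  | 1, i, h => by
      simp only [bspline, ne_eq, ite_eq_right_iff, Classical.not_imp] at h
      exact h.1
  | d + 2, i, h => by
      simp only [bspline] at h
      rcases ne_or_eq (bspline τ (d + 1) i t) 0 with h₁ | h₁
      · exact Set.Ico_subset_Ico_right (hτ (by omega)) (mem_Ico_of_bspline_ne_zero h₁)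
      · rw [h₁, mul_zero, zero_add] at h
        exact Set.Ico_subset_Ico (hτ (by omega)) (hτ (by omega))
          (mem_Ico_of_bspline_ne_zero (right_ne_zero_of_mul h))

theorem bspline_nonneg : ∀ (d i : ℕ), 0 ≤ bspline τ d i t
  | 0, _ => le_rfl
  | 1, i => by
      simp only [bspline]
      split_ifs <;> norm_num
  | d + 2, i => by
      -- each recursion weight is nonnegative wherever the B-spline it multiplies is nonzero
      have weighted {a b : ℝ} {j : ℕ} (hab : t ∈ Set.Ico (τ j) (τ (j + (d + 1))) → 0 ≤ a ∧ 0 ≤ b) :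
          0 ≤ a / b * bspline τ (d + 1) j t := by
        rcases eq_or_ne (bspline τ (d + 1) j t) 0 with h | h
        · rw [h, mul_zero]
        · obtain ⟨ha, hb⟩ := hab (mem_Ico_of_bspline_ne_zero hτ h)
          exact mul_nonneg (div_nonneg ha hb) (bspline_nonneg (d + 1) j)
      simp only [bspline]
      refine add_nonneg (weighted fun ht => ⟨?_, ?_⟩) (weighted fun ht => ⟨?_, ?_⟩)
      · linarith [ht.1]
      · linarith [hτ (show i ≤ i + d + 1 by omega)]
      · rw [show i + 1 + (d + 1) = i + d + 2 by omega] at ht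
        linarith [ht.2]
      · linarith [hτ (show i + 1 ≤ i + d + 2 by omega)]

theorem weights_add_mul_bspline (d j : ℕ) :
    ((t - τ j) / (τ (j + d) - τ j) + (τ (j + d) - t) / (τ (j + d) - τ j)) * bspline τ d j t
      = bspline τ d j t := by
  rcases eq_or_ne (bspline τ d j t) 0 with h | h
  · rw [h, mul_zero]
  · obtain ⟨hj, hjd⟩ := mem_Ico_of_bspline_ne_zero hτ h
    rw [← add_div, sub_add_sub_cancel', div_self (by linarith), one_mul]

theorem sum_range_bspline_eq_one :
    ∀ (e k : ℕ), t ∈ Set.Ico (τ (k + e)) (τ (k + e + 1)) →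
      ∑ r ∈ range (e + 1), bspline τ (e + 1) (k + r) t = 1
  | 0, k, ht => by
      rw [add_zero] at ht
      rw [zero_add, sum_range_one, add_zero]
      exact if_pos ht
  | e + 1, k, ht => by
      have hfirst : bspline τ (e + 1) k t = 0 := by
        by_contra h
        exact (mem_Ico_of_bspline_ne_zero hτ h).2.not_ge ht.1
      have hlast : bspline τ (e + 1) (k + e + 2) t = 0 := by
        by_contra h
        exact (mem_Ico_of_bspline_ne_zero hτ h).1.not_gt (ht.2.trans_le (hτ (by omega)))
      have hrest := sum_range_bspline_eq_one e (k + 1) (by rwa [add_right_comm k 1 e])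
      set B := fun j => bspline τ (e + 1) j t
      set ω := fun j => (t - τ j) / (τ (j + (e + 1)) - τ j)
      set ω' := fun j => (τ (j + (e + 1)) - t) / (τ (j + (e + 1)) - τ j)
      have hrec : ∀ j, bspline τ (e + 2) j t = ω j * B j + ω' (j + 1) * B (j + 1) := by
        intro j
        simp only [bspline, ω, ω', B]
        rw [show j + 1 + (e + 1) = j + e + 2 by omega]
        rfl
      calc ∑ r ∈ range (e + 2), bspline τ (e + 2) (k + r) t
          = ∑ r ∈ range (e + 2), ω (k + r) * B (k + r)
              + ∑ r ∈ range (e + 2), ω' (k + r + 1) * B (k + r + 1) := by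
            simp only [hrec, sum_add_distrib]
        _ = ∑ r ∈ range (e + 1), ω (k + r + 1) * B (k + r + 1)
              + ∑ r ∈ range (e + 1), ω' (k + r + 1) * B (k + r + 1) := by
            rw [sum_range_succ' (fun r => ω (k + r) * B (k + r)),
              sum_range_succ (fun r => ω' (k + r + 1) * B (k + r + 1))]
            simp only [B, add_zero, hfirst, show k + (e + 1) + 1 = k + e + 2 by omega, hlast,
              mul_zero]
            rfl
        _ = ∑ r ∈ range (e + 1), B (k + 1 + r) := by
            rw [← sum_add_distrib]
            refine sum_congr rfl fun r _ => ?_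
            rw [← add_mul, add_right_comm k 1 r]
            exact weights_add_mul_bspline hτ (e + 1) (k + r + 1)
        _ = 1 := hrest

theorem bspline_eq_zero_of_notMem_Ico {d i j : ℕ} (hti : t ∈ Set.Ico (τ i) (τ (i + 1)))
    (hj : j ∉ Ico (i + 1 - d) (i + 1)) : bspline τ d j t = 0 := by
  by_contra h
  obtain ⟨hτj, hτjd⟩ := mem_Ico_of_bspline_ne_zero hτ h
  have hlo : ¬ j + d ≤ i := fun hle => ((hτ hle).trans hti.1).not_gt hτjd
  have hhi : ¬ i + 1 ≤ j := fun hle => ((hτ hle).trans hτj).not_gt hti.2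
  exact hj (mem_Ico.2 (by omega))

theorem sum_bspline_eq_one {d i : ℕ} {s : Finset ℕ} (hd : 0 < d) (hdi : d ≤ i + 1)
    (hti : t ∈ Set.Ico (τ i) (τ (i + 1))) (hs : Ico (i + 1 - d) (i + 1) ⊆ s) :
    ∑ j ∈ s, bspline τ d j t = 1 := by
  rw [← sum_subset hs fun j _ hj => bspline_eq_zero_of_notMem_Ico hτ hti hj,
    sum_Ico_eq_sum_range]
  obtain ⟨e, rfl⟩ : ∃ e, d = e + 1 := ⟨d - 1, by omega⟩
  rw [show i + 1 - (i + 1 - (e + 1)) = e + 1 by omega]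
  exact sum_range_bspline_eq_one hτ e _ (by rwa [show i + 1 - (e + 1) + e = i by omega])

end Monotone

theorem Monotone.exists_mem_Ico_of_mem_Ico {α : Type*} [LinearOrder α] {f : ℕ → α}
    (hf : Monotone f) {a b : ℕ} {x : α} (hx : x ∈ Set.Ico (f a) (f b)) :
    ∃ i ∈ Ico a b, x ∈ Set.Ico (f i) (f (i + 1)) := by
  have hab : a ≤ b := le_of_not_gt fun h => (hx.1.trans_lt hx.2).not_ge (hf h.le)
  induction b, hab using Nat.le_induction with
  | base => exact absurd (hx.1.trans_lt hx.2) (lt_irrefl _)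
  | succ b hab ih =>
    by_cases hb : f b ≤ x
    · exact ⟨b, mem_Ico.2 ⟨hab, b.lt_succ_self⟩, hb, hx.2⟩
    · obtain ⟨i, hi, hxi⟩ := ih ⟨hx.1, not_le.1 hb⟩
      exact ⟨i, Ico_subset_Ico_right b.le_succ hi, hxi⟩

theorem sum_bspline_smul_notMem {E : Type*} [NormedAddCommGroup E] [InnerProductSpace ℝ E]
    {τ : ℕ → ℝ} (hτ : Monotone τ) {d n : ℕ} (hd : 1 ≤ d) (p : ℕ → E) {O : Set E}
    (hsep : ∀ i, d - 1 ≤ i → i ≤ n →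
      ∃ c : E, ∀ j, i - (d - 1) ≤ j → j ≤ i → ∀ x ∈ O, ⟪c, p j⟫ < ⟪c, x⟫)
    {t : ℝ} (ht : t ∈ Set.Ico (τ (d - 1)) (τ (n + 1))) :
    ∑ j ∈ range (n + 1), bspline τ d j t • p j ∉ O := by
  obtain ⟨i, hi, hti⟩ := hτ.exists_mem_Ico_of_mem_Ico ht
  rw [mem_Ico] at hi
  obtain ⟨c, hc⟩ := hsep i hi.1 (by omega)
  have hwindow : Ico (i + 1 - d) (i + 1) ⊆ range (n + 1) := fun j hj => by
    rw [mem_Ico] at hj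
    rw [mem_range]
    omega
  intro hz
  set z := ∑ j ∈ range (n + 1), bspline τ d j t • p j
  have hz_window : z = ∑ j ∈ Ico (i + 1 - d) (i + 1), bspline τ d j t • p j :=
    (sum_subset hwindow fun j _ hj => by
      rw [bspline_eq_zero_of_notMem_Ico hτ hti hj, zero_smul]).symm
  have hmem : ∑ j ∈ Ico (i + 1 - d) (i + 1), bspline τ d j t • p j ∈ {y | ⟪c, y⟫ < ⟪c, z⟫} := by
    refine (convex_halfSpace_lt (innerₛₗ ℝ c).isLinear ⟪c, z⟫).sum_mem
      (fun j _ => bspline_nonneg hτ d j) (sum_bspline_eq_one hτ hd (by omega) hti subset_rfl)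
      fun j hj => ?_
    rw [mem_Ico] at hj
    exact hc j (by omega) (by omega) z hz
  rw [← hz_window] at hmem
  exact lt_irrefl ⟪c, z⟫ hmem

/-- Proposition 1: if for every window of `d` consecutive control
points there is a hyperplane strictly separating them from the obstacle `O`,
then the B-spline curve avoids `O` (here `n = m - d`). -/
theorem bspline_obstacle_avoidance (q m d : ℕ) (τ : ℕ → ℝ)
    (hτ : ∀ j, j < m → τ j < τ (j + 1))
    (hd : 1 ≤ d) (hdm : d ≤ m)
    (p : ℕ → EuclideanSpace ℝ (Fin q))
    (O : Set (EuclideanSpace ℝ (Fin q)))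
    (hsep : ∀ i, d - 1 ≤ i → i ≤ m - d →
      ∃ c : EuclideanSpace ℝ (Fin q),
        ∀ j, i - (d - 1) ≤ j → j ≤ i → ∀ x ∈ O, ⟪c, p j⟫ < ⟪c, x⟫)
    (t : ℝ) (ht1 : τ (d - 1) ≤ t) (ht2 : t < τ (m - d + 1)) :
    (∑ j ∈ Finset.range (m - d + 1), bspline τ d j t • p j) ∉ O := by
  -- freeze the knots beyond `τ m`, which are unconstrained, to get a monotone knot sequence
  set σ : ℕ → ℝ := fun j => τ (min j m)
  have hστ : Set.EqOn σ τ (Set.Iic m) := fun j hj => by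
    simp only [σ, min_eq_left (Set.mem_Iic.1 hj)]
  have hσ : Monotone σ := fun a b hab =>
    (strictMonoOn_Iic_of_lt_succ hτ).monotoneOn (min_le_right a m) (min_le_right b m)
      (min_le_min_right m hab)
  have hcurve : ∑ j ∈ range (m - d + 1), bspline τ d j t • p j
      = ∑ j ∈ range (m - d + 1), bspline σ d j t • p j := by
    refine sum_congr rfl fun j hj => ?_
    rw [mem_range] at hj
    rw [bspline_congr (hστ.symm.mono fun a ha => (ha.2.trans (by omega) : a ≤ m))]
  rw [hcurve]
  refine sum_bspline_smul_notMem hσ hd p hsep ⟨?_, ?_⟩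
  · rwa [hστ (show d - 1 ≤ m by omega)]
  · rwa [hστ (show m - d + 1 ≤ m by omega)]
end

section
/- (Mixed-integer inter-agent collision avoidance, Corollary 2.) Let z¹ and z² be two B-spline curves of the same order d defined over the same strictly increasing knot vector τ_0 < … < τ_m, with control points p^1_0,…,p^1_n and p^2_0,…,p^2_n respectively (n = m − d). Let h_1,…,h_M ∈ ℝ^q, let T ∈ ℝ, and suppose for every index i with d − 1 ≤ i ≤ n there are binary variables β_{i,1},…,β_{i,M} ∈ {0,1} such that: (a) Σ_{m=1}^{M} β_{i,m} ≤ M − 1, and (b) ⟨h_m, p^1_{j_1}⟩ < ⟨h_m, p^2_{j_2}⟩ + T·β_{i,m} for all m = 1,…,M and all j_1, j_2 with i − d + 1 ≤ j_1, j_2 ≤ i. Then z¹(t) ≠ z²(t) for every t with τ_{d−1} ≤ t < τ_{n+1}. -/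
open scoped RealInnerProductSpace

/-!
On a knot span `[τ i, τ (i + 1))` only the basis functions `B_{j,d}` with `i - d < j ≤ i` can be
nonzero, and they are nonnegative with sum `1`, so `z¹(t)` and `z²(t)` are convex combinations of
the control points of that window with the same weights. Since the `β_{i,l}` are binary with sum
at most `M - 1`, some `β_{i,l}` vanishes, and then `⟪h l, ·⟫` is strictly smaller on every control
point of the first curve in the window than on the corresponding one of the second; the strict
inequality survives the convex combination.
-/

open Finset

section BSpline

variable {τ : ℕ → ℝ} {m d i j a b : ℕ} {t : ℝ}

noncomputable def knotRatio (τ : ℕ → ℝ) (d j : ℕ) (t : ℝ) : ℝ := (t - τ j) / (τ (j + d) - τ j)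

theorem bspline_succ (hd : d ≠ 0) :
    bspline τ (d + 1) j t = knotRatio τ d j t * bspline τ d j t
      + (τ (j + 1 + d) - t) / (τ (j + 1 + d) - τ (j + 1)) * bspline τ d (j + 1) t := by
  obtain ⟨d, rfl⟩ := Nat.exists_eq_succ_of_ne_zero hd
  rw [bspline, knotRatio, show j + 1 + (d + 1) = j + d + 2 by omega]
  rfl

theorem bspline_eq_zero_of_notMem_Ico_s10 (hτ : MonotoneOn τ (Set.Iic m)) :
    ∀ {d j : ℕ}, j + d ≤ m → t ∉ Set.Ico (τ j) (τ (j + d)) → bspline τ d j t = 0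
  | 0, _, _, _ => rfl
  | 1, _, _, ht => if_neg ht
  | d + 2, j, hjd, ht => by
    have mono : ∀ k l : ℕ, k ≤ l → l ≤ m → τ k ≤ τ l := fun k l hkl hl =>
      hτ (Set.mem_Iic.2 (hkl.trans hl)) (Set.mem_Iic.2 hl) hkl
    rw [bspline, bspline_eq_zero_of_notMem_Ico_s10 hτ (by omega) fun h => ht ?_,
      bspline_eq_zero_of_notMem_Ico_s10 hτ (by omega) fun h => ht ?_, mul_zero, mul_zero, add_zero]
    · exact Set.Ico_subset_Ico (mono _ _ (by omega) (by omega)) (mono _ _ (by omega) hjd) h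
    · exact Set.Ico_subset_Ico le_rfl (mono _ _ (by omega) hjd) h

theorem bspline_nonneg_s10 (hτ : MonotoneOn τ (Set.Iic m)) : ∀ {d j : ℕ}, j + d ≤ m →
    0 ≤ bspline τ d j t
  | 0, _, _ => le_rfl
  | 1, _, _ => by unfold bspline; split_ifs <;> norm_num
  | d + 2, j, hjd => by
    rw [bspline]
    refine add_nonneg ?_ ?_
    · by_cases ht : t ∈ Set.Ico (τ j) (τ (j + (d + 1)))
      · exact mul_nonneg (div_nonneg (sub_nonneg.2 ht.1) (sub_nonneg.2 (ht.1.trans ht.2.le)))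
          (bspline_nonneg_s10 hτ (by omega))
      · rw [bspline_eq_zero_of_notMem_Ico_s10 hτ (by omega) ht, mul_zero]
    · by_cases ht : t ∈ Set.Ico (τ (j + 1)) (τ (j + 1 + (d + 1)))
      · rw [show j + 1 + (d + 1) = j + d + 2 by omega] at ht
        exact mul_nonneg (div_nonneg (sub_nonneg.2 ht.2.le) (sub_nonneg.2 (ht.1.trans ht.2.le)))
          (bspline_nonneg_s10 hτ (by omega))
      · rw [bspline_eq_zero_of_notMem_Ico_s10 hτ (by omega) ht, mul_zero]

theorem le_and_lt_add_of_bspline_ne_zero (hτ : MonotoneOn τ (Set.Iic m)) (hjd : j + d ≤ m)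
    (him : i ≤ m) (hti : τ i ≤ t) (hti' : t < τ (i + 1)) (hB : bspline τ d j t ≠ 0) :
    j ≤ i ∧ i < j + d := by
  obtain ⟨htj, htj'⟩ := not_not.1 (mt (bspline_eq_zero_of_notMem_Ico_s10 hτ hjd) hB)
  constructor
  · by_contra! hij
    exact (hti'.trans_le (hτ (Set.mem_Iic.2 (by omega)) (Set.mem_Iic.2 (by omega)) hij)).not_ge htj
  · by_contra! hij
    exact (htj'.trans_le ((hτ (Set.mem_Iic.2 hjd) (Set.mem_Iic.2 him) hij).trans hti)).false

theorem bspline_succ_of_monotoneOn (hτ : MonotoneOn τ (Set.Iic m)) (hd : d ≠ 0)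
    (hjd : j + 1 + d ≤ m) :
    bspline τ (d + 1) j t = knotRatio τ d j t * bspline τ d j t
      + (bspline τ d (j + 1) t - knotRatio τ d (j + 1) t * bspline τ d (j + 1) t) := by
  rw [bspline_succ hd]
  congr 1
  by_cases ht : t ∈ Set.Ico (τ (j + 1)) (τ (j + 1 + d))
  · have hden : τ (j + 1 + d) - τ (j + 1) ≠ 0 := by linarith [ht.1, ht.2]
    rw [knotRatio]
    field_simp
    ring
  · simp [bspline_eq_zero_of_notMem_Ico_s10 hτ hjd ht]

theorem sum_Icc_bspline_succ (hτ : MonotoneOn τ (Set.Iic m)) (hd : d ≠ 0) (hab : a ≤ b)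
    (hbm : b + 1 + d ≤ m) (ha : bspline τ d a t = 0) (hb : bspline τ d (b + 1) t = 0) :
    ∑ j ∈ Icc a b, bspline τ (d + 1) j t = ∑ j ∈ Icc a b, bspline τ d j t := by
  set u : ℕ → ℝ := fun j => knotRatio τ d j t * bspline τ d j t
  have step : ∀ j ∈ Icc a b, bspline τ (d + 1) j t = bspline τ d j t
      + ((bspline τ d (j + 1) t - bspline τ d j t) - (u (j + 1) - u j)) := by
    intro j hj
    rw [bspline_succ_of_monotoneOn hτ hd (by simp only [mem_Icc] at hj; omega)]
    ring
  rw [sum_congr rfl step, sum_add_distrib, sum_sub_distrib, sum_Icc_sub hab,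
    sum_Icc_sub hab fun j => bspline τ d j t]
  simp [u, ha, hb]

theorem sum_Icc_bspline_eq_one (hτ : MonotoneOn τ (Set.Iic m)) (hti : τ i ≤ t)
    (hti' : t < τ (i + 1)) (hd : 1 ≤ d) :
    ∀ {a b : ℕ}, a + d ≤ i + 1 → i ≤ b → b + d ≤ m → ∑ j ∈ Icc a b, bspline τ d j t = 1 := by
  induction d, hd using Nat.le_induction with
  | base =>
    intro a b ha hb hbm
    rw [sum_eq_single_of_mem i (mem_Icc.2 ⟨by omega, hb⟩) fun j hj hji => ?_]
    · exact if_pos ⟨hti, hti'⟩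
    · rw [mem_Icc] at hj
      by_contra hB
      have := le_and_lt_add_of_bspline_ne_zero hτ (by omega) (by omega) hti hti' hB
      omega
  | succ d hd ih =>
    intro a b ha hb hbm
    have outside : ∀ j, j + d ≤ m → (i < j ∨ j + d ≤ i) → bspline τ d j t = 0 := by
      intro j hjd hj
      by_contra hB
      have := le_and_lt_add_of_bspline_ne_zero hτ hjd (by omega) hti hti' hB
      omega
    rw [sum_Icc_bspline_succ hτ (by omega) (by omega) (by omega) (outside a (by omega) (by omega))
      (outside (b + 1) (by omega) (by omega))]
    exact ih (by omega) hb (by omega)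

end BSpline

theorem exists_knot_span {α : Type*} [LinearOrder α] {τ : ℕ → α} {a b : ℕ} {t : α} (hab : a ≤ b)
    (ha : τ a ≤ t) (hb : t < τ b) : ∃ i, a ≤ i ∧ i < b ∧ τ i ≤ t ∧ t < τ (i + 1) := by
  induction b, hab using Nat.le_induction with
  | base => exact absurd hb ha.not_gt
  | succ b hab ih =>
    by_cases hbt : τ b ≤ t
    · exact ⟨b, hab, b.lt_succ_self, hbt, hb⟩
    · obtain ⟨i, hai, hib, hi⟩ := ih (not_le.1 hbt)
      exact ⟨i, hai, hib.trans b.lt_succ_self, hi⟩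

theorem exists_eq_zero_of_sum_lt_card {ι R : Type*} [AddCommMonoidWithOne R] [PartialOrder R]
    [IsOrderedAddMonoid R] {s : Finset ι} {β : ι → R}
    (hβ : ∀ l ∈ s, β l = 0 ∨ β l = 1) (hsum : ∑ l ∈ s, β l < #s) : ∃ l ∈ s, β l = 0 := by
  by_contra! hne
  have hone : ∀ l ∈ s, 1 ≤ β l := fun l hl => ((hβ l hl).resolve_left (hne l hl)).ge
  have := card_nsmul_le_sum s β 1 hone
  rw [nsmul_one] at this
  exact this.not_gt hsum

theorem sum_smul_ne_sum_smul_of_inner_lt {ι E : Type*} [NormedAddCommGroup E]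
    [InnerProductSpace ℝ E] {s : Finset ι} {w : ι → ℝ} {p₁ p₂ : ι → E} (v : E)
    (hw : ∀ j ∈ s, 0 ≤ w j) (hne : ∃ j ∈ s, w j ≠ 0)
    (hlt : ∀ j ∈ s, w j ≠ 0 → ⟪v, p₁ j⟫ < ⟪v, p₂ j⟫) :
    ∑ j ∈ s, w j • p₁ j ≠ ∑ j ∈ s, w j • p₂ j := by
  intro heq
  have hinner := congrArg (⟪v, ·⟫) heq
  simp only [inner_sum, real_inner_smul_right] at hinner
  refine hinner.not_lt (sum_lt_sum (fun j hj => ?_) ?_)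
  · by_cases hwj : w j = 0
    · simp [hwj]
    · exact mul_le_mul_of_nonneg_left (hlt j hj hwj).le (hw j hj)
  · obtain ⟨j, hj, hwj⟩ := hne
    exact ⟨j, hj, mul_lt_mul_of_pos_left (hlt j hj hwj) (lt_of_le_of_ne (hw j hj) (Ne.symm hwj))⟩

/-- Corollary 2: mixed-integer inter-agent collision avoidance
for two B-spline curves sharing the same knot vector (here `n = m - d`;
hyperplane normals are indexed `0, …, M-1`). -/
theorem bspline_mixed_integer_interagent_avoidance (q m d M : ℕ) (τ : ℕ → ℝ)
    (hτ : ∀ j, j < m → τ j < τ (j + 1))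
    (hd : 1 ≤ d) (hdm : d ≤ m)
    (p1 p2 : ℕ → EuclideanSpace ℝ (Fin q))
    (h : ℕ → EuclideanSpace ℝ (Fin q))
    (T : ℝ)
    (hmi : ∀ i, d - 1 ≤ i → i ≤ m - d →
      ∃ β : ℕ → ℝ,
        (∀ l, l < M → β l = 0 ∨ β l = 1) ∧
        (∑ l ∈ Finset.range M, β l ≤ (M : ℝ) - 1) ∧
        (∀ l, l < M → ∀ j1 j2, i - (d - 1) ≤ j1 → j1 ≤ i →
          i - (d - 1) ≤ j2 → j2 ≤ i →
          ⟪h l, p1 j1⟫ < ⟪h l, p2 j2⟫ + T * β l))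
    (t : ℝ) (ht1 : τ (d - 1) ≤ t) (ht2 : t < τ (m - d + 1)) :
    (∑ j ∈ Finset.range (m - d + 1), bspline τ d j t • p1 j) ≠
      (∑ j ∈ Finset.range (m - d + 1), bspline τ d j t • p2 j) := by
  have hmono : MonotoneOn τ (Set.Iic m) := (strictMonoOn_Iic_of_lt_succ hτ).monotoneOn
  obtain ⟨i, hi, hin, hti, hti'⟩ := exists_knot_span
    (hmono.reflect_lt (Set.mem_Iic.2 (by omega)) (Set.mem_Iic.2 (by omega)) (ht1.trans_lt ht2)).le
    ht1 ht2
  obtain ⟨β, hβ, hβsum, hsep⟩ := hmi i hi (by omega)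
  obtain ⟨l, hl, hβl⟩ := exists_eq_zero_of_sum_lt_card (s := range M)
    (fun l hl => hβ l (mem_range.1 hl)) (by rw [card_range]; linarith)
  have hunity : ∑ j ∈ range (m - d + 1), bspline τ d j t = 1 := by
    rw [range_eq_Ico, Ico_add_one_right_eq_Icc]
    exact sum_Icc_bspline_eq_one hmono hti hti' hd (by omega) (by omega) (by omega)
  refine sum_smul_ne_sum_smul_of_inner_lt (h l) (fun j hj => bspline_nonneg_s10 hmono ?_)
    (exists_ne_zero_of_sum_ne_zero (by simp [hunity])) fun j hj hB => ?_
  · simp only [mem_range] at hj; omega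
  · simp only [mem_range] at hj
    obtain ⟨hji, hij⟩ := le_and_lt_add_of_bspline_ne_zero hmono (by omega) (by omega) hti hti' hB
    simpa [hβl] using hsep l (mem_range.1 hl) j j (by omega) hji (by omega) hji
end
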